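/- Let X̃ ∈ S_n with 𝒜(X̃) = 0 and σ > 0. Let Y ∈ ℝ^{n×p} have every row of unit Euclidean norm, set S = Y·Yᵀ, y⁺ = (𝒜𝒜*)^{-1}𝒜(S + C), R = 𝒜*(y⁺) − S − C, X̃⁺ = X̃ − σ·R, z⁺ = diag((X̃⁺ + D)·S), and X⁺ = X̃⁺ + D − Diag(z⁺). Suppose ‖X⁺·Y‖ ≤ ε and λ_min(X⁺) ≥ −τ for some ε, τ ≥ 0. Let (S*, y*, X*, z*) be a KKT point of (DSDP') (S* = 𝒜*(y*) − C, diag(S*) = 1, S*, X* positive semidefinite, ⟨X*, S*⟩ = 0, 𝒜(X* + Diag(z*)) = b) and set X̃* = X* − D + Diag(z*). Then ⟨X̃ − X̃*, R⟩ ≥ σ·‖R‖² − n·τ − √n·ε. -/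

import Mathlib

open Matrix BigOperators

/-- Frobenius inner product `⟨A, B⟩ = Tr(AᵀB)`. -/
noncomputable def fip {k l : Type*} [Fintype k] [Fintype l] (A B : Matrix k l ℝ) : ℝ :=
  (Aᵀ * B).trace

/-- Frobenius norm `‖A‖ = √Tr(AᵀA)`. -/
noncomputable def frobNorm {k l : Type*} [Fintype k] [Fintype l] (A : Matrix k l ℝ) : ℝ :=
  Real.sqrt (fip A A)

/-- The linear operator `𝒜 : S_n → ℝ^m`, `𝒜(X) = (⟨A_i, X⟩)_i`. -/
noncomputable def opA {n m : ℕ} (A : Fin m → Matrix (Fin n) (Fin n) ℝ)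
    (X : Matrix (Fin n) (Fin n) ℝ) : Fin m → ℝ :=
  fun i => fip (A i) X

/-- The adjoint operator `𝒜* : ℝ^m → S_n`, `𝒜*(y) = Σ_i y_i A_i`. -/
noncomputable def adjA {n m : ℕ} (A : Fin m → Matrix (Fin n) (Fin n) ℝ)
    (y : Fin m → ℝ) : Matrix (Fin n) (Fin n) ℝ :=
  ∑ i, y i • A i

/-- The inverse `(𝒜𝒜*)⁻¹` of the operator `𝒜𝒜* : ℝ^m → ℝ^m`. -/
noncomputable def AAinv {n m : ℕ} (A : Fin m → Matrix (Fin n) (Fin n) ℝ) :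
    (Fin m → ℝ) → (Fin m → ℝ) :=
  Function.invFun (fun y => opA A (adjA A y))

section helpers
variable {k l : Type*} [Fintype k] [Fintype l]

lemma fip_eq (A B : Matrix k l ℝ) : fip A B = ∑ i, ∑ j, A i j * B i j := by
  rw [fip]
  simp only [Matrix.trace, Matrix.diag, Matrix.mul_apply, Matrix.transpose_apply]
  exact Finset.sum_comm

lemma fip_comm (A B : Matrix k l ℝ) : fip A B = fip B A := by
  simp [fip_eq, mul_comm]

lemma fip_zero_left (B : Matrix k l ℝ) : fip 0 B = 0 := by simp [fip_eq]

lemma fip_add_left (A B C : Matrix k l ℝ) : fip (A + B) C = fip A C + fip B C := by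
  simp [fip_eq, add_mul, Finset.sum_add_distrib]

lemma fip_sub_left (A B C : Matrix k l ℝ) : fip (A - B) C = fip A C - fip B C := by
  simp [fip_eq, sub_mul, Finset.sum_sub_distrib]

lemma fip_add_right (A B C : Matrix k l ℝ) : fip A (B + C) = fip A B + fip A C := by
  simp [fip_eq, mul_add, Finset.sum_add_distrib]

lemma fip_sub_right (A B C : Matrix k l ℝ) : fip A (B - C) = fip A B - fip A C := by
  simp [fip_eq, mul_sub, Finset.sum_sub_distrib]

lemma fip_smul_left (c : ℝ) (A B : Matrix k l ℝ) : fip (c • A) B = c * fip A B := by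
  simp [fip_eq, Finset.mul_sum, mul_assoc]

lemma fip_sum_left {ι : Type*} (s : Finset ι) (M : ι → Matrix k l ℝ) (X : Matrix k l ℝ) :
    fip (∑ i ∈ s, M i) X = ∑ i ∈ s, fip (M i) X := by
  classical
  induction s using Finset.induction_on with
  | empty => simp [fip_zero_left]
  | insert _ _ h ih => rw [Finset.sum_insert h, Finset.sum_insert h, fip_add_left, ih]

lemma fip_diagonal {n : Type*} [Fintype n] [DecidableEq n] (w : n → ℝ)
    (M : Matrix n n ℝ) : fip (Matrix.diagonal w) M = ∑ i, w i * M i i := by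
  simp [fip_eq, Matrix.diagonal_apply, ite_mul]

lemma herm_transpose {n : Type*} [Fintype n] {M : Matrix n n ℝ} (hM : M.IsHermitian) :
    Mᵀ = M := by
  rw [← Matrix.conjTranspose_eq_transpose_of_trivial]; exact hM

lemma psd_diag_nonneg {n : Type*} [Fintype n] [DecidableEq n] {M : Matrix n n ℝ}
    (hM : M.PosSemidef) (i : n) : 0 ≤ M i i := by
  exact hM.diag_nonneg

lemma psd_trace_nonneg {n : Type*} [Fintype n] [DecidableEq n] {M : Matrix n n ℝ}
    (hM : M.PosSemidef) : 0 ≤ M.trace :=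
  Finset.sum_nonneg fun i _ => psd_diag_nonneg hM i

lemma fip_psd_nonneg {n : Type*} [Fintype n] [DecidableEq n] {P Q : Matrix n n ℝ}
    (hP : P.PosSemidef) (hQ : Q.PosSemidef) : 0 ≤ fip P Q := by
  obtain ⟨B, hB⟩ : ∃ B : Matrix n n ℝ, Q = Bᴴ * B := by
    open scoped MatrixOrder Matrix.Norms.L2Operator in
    obtain ⟨B, hB⟩ := CStarAlgebra.nonneg_iff_eq_star_mul_self.mp hQ.nonneg
    exact ⟨B, hB⟩
  rw [fip, herm_transpose hP.1, hB, Matrix.conjTranspose_eq_transpose_of_trivial,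
    ← Matrix.mul_assoc, Matrix.trace_mul_cycle]
  have hpsd := hP.mul_mul_conjTranspose_same B
  rw [Matrix.conjTranspose_eq_transpose_of_trivial] at hpsd
  exact psd_trace_nonneg hpsd

lemma herm_add_smul_one_psd {n : Type*} [Fintype n] [DecidableEq n]
    {M : Matrix n n ℝ} (hM : M.IsHermitian) (τ : ℝ) (h : ∀ i, -τ ≤ hM.eigenvalues i) :
    (M + τ • (1 : Matrix n n ℝ)).PosSemidef := by
  set U : Matrix n n ℝ := (hM.eigenvectorUnitary : Matrix n n ℝ) with hUdef
  have hU : U * star U = 1 := (Matrix.mem_unitaryGroup_iff).mp (hM.eigenvectorUnitary).2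
  have key : M + τ • (1 : Matrix n n ℝ)
      = U * Matrix.diagonal (fun i => hM.eigenvalues i + τ) * (star U) := by
    have hd : Matrix.diagonal (fun i => hM.eigenvalues i + τ)
        = Matrix.diagonal (RCLike.ofReal ∘ hM.eigenvalues) + τ • (1 : Matrix n n ℝ) := by
      ext i j
      by_cases hij : i = j <;>
        simp [Matrix.diagonal_apply, Matrix.one_apply, hij, RCLike.ofReal_real_eq_id]
    rw [hd, Matrix.mul_add, Matrix.add_mul]
    conv_lhs => rw [hM.spectral_theorem, Unitary.conjStarAlgAut_apply]
    congr 1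
    rw [Matrix.mul_smul, Matrix.smul_mul, Matrix.mul_one, hU]
  rw [key]
  have hdiag : (Matrix.diagonal (fun i => hM.eigenvalues i + τ)).PosSemidef :=
    Matrix.posSemidef_diagonal_iff.mpr fun i => by linarith [h i]
  have := hdiag.mul_mul_conjTranspose_same U
  rwa [Matrix.star_eq_conjTranspose]

lemma fip_le_frob (A B : Matrix k l ℝ) : fip A B ≤ frobNorm A * frobNorm B := by
  have h := Real.sum_mul_le_sqrt_mul_sqrt Finset.univ
    (fun x : k × l => A x.1 x.2) (fun x : k × l => B x.1 x.2)
  rw [fip_eq, frobNorm, frobNorm, fip_eq, fip_eq]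
  simpa [Fintype.sum_prod_type, pow_two] using h

lemma fip_adjA_left {n m : ℕ} (A : Fin m → Matrix (Fin n) (Fin n) ℝ) (y : Fin m → ℝ)
    (X : Matrix (Fin n) (Fin n) ℝ) : fip (adjA A y) X = ∑ i, y i * opA A X i := by
  rw [adjA, fip_sum_left]
  simp [fip_smul_left, opA]

lemma fip_adjA_zero {n m : ℕ} (A : Fin m → Matrix (Fin n) (Fin n) ℝ)
    (X : Matrix (Fin n) (Fin n) ℝ) (hX : opA A X = 0) (y : Fin m → ℝ) :
    fip X (adjA A y) = 0 := by
  rw [fip_comm, fip_adjA_left, hX]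
  simp

end helpers

/-- Lemma 5.4 of the paper: one ADMM step started from `X̃` with
`𝒜(X̃) = 0` and an approximate subproblem solution `Y` (criterion
`‖X⁺Y‖ ≤ ε`, `λ_min(X⁺) ≥ −τ`) satisfies
`⟨X̃ − X̃*, R⟩ ≥ σ‖R‖² − nτ − √n·ε` for any KKT point `(S*, y*, X*, z*)` of
(DSDP') with `X̃* = X* − D + Diag(z*)`. -/
theorem stmt15 {n m p : ℕ} (hn : 0 < n) (hm : 0 < m)
    (A : Fin m → Matrix (Fin n) (Fin n) ℝ) (hA : ∀ i, (A i).IsSymm)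
    (hinv : Function.Bijective (fun y : Fin m → ℝ => opA A (adjA A y)))
    (b : Fin m → ℝ) (C : Matrix (Fin n) (Fin n) ℝ) (hC : C.IsSymm)
    (D : Matrix (Fin n) (Fin n) ℝ) (hD : D = adjA A (AAinv A b))
    (Xt : Matrix (Fin n) (Fin n) ℝ) (hXt : Xt.IsSymm) (hAXt : opA A Xt = 0)
    (σ : ℝ) (hσ : 0 < σ)
    (Y : Matrix (Fin n) (Fin p) ℝ) (hY : ∀ i, ∑ j, (Y i j) ^ 2 = 1)
    (S : Matrix (Fin n) (Fin n) ℝ) (hS : S = Y * Yᵀ)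
    (yplus : Fin m → ℝ) (hyplus : yplus = AAinv A (opA A (S + C)))
    (R : Matrix (Fin n) (Fin n) ℝ) (hR : R = adjA A yplus - S - C)
    (Xtplus : Matrix (Fin n) (Fin n) ℝ) (hXtplus : Xtplus = Xt - σ • R)
    (zplus : Fin n → ℝ) (hzplus : zplus = Matrix.diag ((Xtplus + D) * S))
    (Xplus : Matrix (Fin n) (Fin n) ℝ)
    (hXplus : Xplus = Xtplus + D - Matrix.diagonal zplus)
    (ε τ : ℝ) (hε : 0 ≤ ε) (hτ : 0 ≤ τ)
    (hstop1 : frobNorm (Xplus * Y) ≤ ε)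
    (hXplusherm : Xplus.IsHermitian)
    (hstop2 : ∀ i, -τ ≤ hXplusherm.eigenvalues i)
    (Sstar Xstar : Matrix (Fin n) (Fin n) ℝ) (ystar : Fin m → ℝ) (zstar : Fin n → ℝ)
    (hSstar : Sstar = adjA A ystar - C)
    (hSstardiag : ∀ i, Sstar i i = 1)
    (hSstarpsd : Sstar.PosSemidef) (hXstarpsd : Xstar.PosSemidef)
    (hcomp : fip Xstar Sstar = 0)
    (hstatKKT : opA A (Xstar + Matrix.diagonal zstar) = b)
    (Xtstar : Matrix (Fin n) (Fin n) ℝ)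
    (hXtstar : Xtstar = Xstar - D + Matrix.diagonal zstar) :
    σ * fip R R - (n : ℝ) * τ - Real.sqrt n * ε ≤ fip (Xt - Xtstar) R := by
  classical
  have hright : ∀ v, opA A (adjA A (AAinv A v)) = v := fun v =>
    Function.rightInverse_invFun hinv.surjective v
  have hopD : opA A D = b := by rw [hD]; exact hright b
  -- opA A R = 0
  have hopR : opA A R = 0 := by
    have h1 : opA A (adjA A yplus) = opA A (S + C) := by rw [hyplus]; exact hright _
    funext i
    have h2 := congrFun h1 i
    simp only [opA] at h2 ⊢
    rw [hR, fip_sub_right, fip_sub_right, h2, fip_add_right]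
    simp
  -- opA A Xtstar = 0
  have hopXtstar : opA A Xtstar = 0 := by
    funext i
    have h1 := congrFun hstatKKT i
    have h2 := congrFun hopD i
    simp only [opA] at h1 h2 ⊢
    rw [fip_add_right] at h1
    rw [hXtstar, fip_add_right, fip_sub_right]
    simp only [Pi.zero_apply]
    linarith
  -- opA A (Xt - Xtstar) = 0
  have hopdiff : opA A (Xt - Xtstar) = 0 := by
    funext i
    have h1 := congrFun hAXt i
    have h2 := congrFun hopXtstar i
    simp only [opA] at h1 h2 ⊢
    rw [fip_sub_right]
    simp only [Pi.zero_apply]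
    linarith
  -- diag of S is 1
  have hSdiag : ∀ i, S i i = 1 := by
    intro i
    rw [hS, ← hY i]
    simp [Matrix.mul_apply, pow_two]
  -- fip R (S - Sstar) = - fip R R
  have hRS : fip R (S - Sstar) = - fip R R := by
    have h1 : fip R (adjA A ystar) = 0 := fip_adjA_zero A R hopR ystar
    have h2 : fip R (adjA A yplus) = 0 := fip_adjA_zero A R hopR yplus
    have h3 : S - Sstar = (adjA A yplus - R) - adjA A ystar := by
      rw [hR, hSstar]; abel
    rw [h3, fip_sub_right, fip_sub_right, h1, h2]
    ring
  -- key identity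
  have hkey : fip (Xt - Xtstar) R
      = σ * fip R R - fip Xplus S + fip Xplus Sstar + fip Xstar S := by
    have hdsub : Matrix.diagonal (fun i => zplus i - zstar i)
        = Matrix.diagonal zplus - Matrix.diagonal zstar := by
      ext i j
      by_cases hij : i = j <;> simp [Matrix.diagonal_apply, hij]
    have hXtexpr : Xt - Xtstar
        = (Xplus - Xstar) + Matrix.diagonal (fun i => zplus i - zstar i) + σ • R := by
      rw [hdsub, hXtstar]
      have hXt' : Xt = Xtplus + σ • R := by rw [hXtplus]; abel
      have hXtp' : Xtplus = Xplus - D + Matrix.diagonal zplus := by rw [hXplus]; abel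
      rw [hXt', hXtp']; abel
    have e1 : fip (Xt - Xtstar) R = - fip (Xt - Xtstar) (S - Sstar) := by
      have h3 : R = adjA A yplus - adjA A ystar - (S - Sstar) := by
        rw [hR, hSstar]; abel
      rw [h3, fip_sub_right, fip_sub_right, fip_adjA_zero A _ hopdiff yplus,
        fip_adjA_zero A _ hopdiff ystar]
      ring
    rw [e1, hXtexpr, fip_add_left, fip_add_left, fip_smul_left, hRS, fip_diagonal,
      fip_sub_left]
    have hdz : ∑ i, (zplus i - zstar i) * ((S - Sstar) i i) = 0 := by
      apply Finset.sum_eq_zero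
      intro i _
      simp [Matrix.sub_apply, hSdiag i, hSstardiag i]
    rw [hdz, fip_sub_right, fip_sub_right, hcomp]
    ring
  -- bound 1 : 0 ≤ fip Xstar S
  have b1 : 0 ≤ fip Xstar S := by
    rw [hS, fip, herm_transpose hXstarpsd.1, ← Matrix.mul_assoc, Matrix.trace_mul_cycle]
    have hpsd := hXstarpsd.conjTranspose_mul_mul_same Y
    rw [Matrix.conjTranspose_eq_transpose_of_trivial] at hpsd
    exact psd_trace_nonneg hpsd
  -- bound 2 : fip Xplus Sstar ≥ - n τ
  have b2 : -((n : ℝ) * τ) ≤ fip Xplus Sstar := by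
    have hPpsd := herm_add_smul_one_psd hXplusherm τ hstop2
    have h0 := fip_psd_nonneg hPpsd hSstarpsd
    have hone : (1 : Matrix (Fin n) (Fin n) ℝ) = Matrix.diagonal (fun _ => 1) :=
      (Matrix.diagonal_one).symm
    have hfip1 : fip (1 : Matrix (Fin n) (Fin n) ℝ) Sstar = n := by
      rw [hone, fip_diagonal]
      simp [hSstardiag]
    rw [fip_add_left, fip_smul_left, hfip1] at h0
    linarith
  -- bound 3 : fip Xplus S ≤ √n * ε
  have b3 : fip Xplus S ≤ Real.sqrt n * ε := by
    have hfrobY : frobNorm Y = Real.sqrt n := by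
      rw [frobNorm]
      congr 1
      rw [fip_eq]
      have h1 : ∀ i : Fin n, ∑ j, Y i j * Y i j = 1 := by
        intro i; rw [← hY i]; simp [pow_two]
      simp [h1]
    have hswap : fip Xplus S = fip Y (Xplus * Y) := by
      rw [hS, fip, fip, herm_transpose hXplusherm, ← Matrix.mul_assoc,
        Matrix.trace_mul_cycle, Matrix.mul_assoc]
    calc fip Xplus S ≤ frobNorm Y * frobNorm (Xplus * Y) := by
          rw [hswap]; exact fip_le_frob _ _
      _ ≤ Real.sqrt n * ε := by
          rw [hfrobY]
          exact mul_le_mul_of_nonneg_left hstop1 (Real.sqrt_nonneg _)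
  rw [hkey]
  linarith
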